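/- Let 𝒞 ⊂ ℝ be a Cantor set with thickness τ(𝒞) > 0. Then the Hausdorff dimension of 𝒞 satisfies dim_H(𝒞) ≥ log 2 / log(2 + 1/τ(𝒞)). -/

import Mathlib

/-!
For `s = log 2 / log (2 + 1/τ)` one has `2 ^ (1/s) = 2 + 1/τ`, and convexity of `t ↦ t ^ (1/s)`
turns thickness into the splitting inequality `(x + g + y) ^ s ≤ x ^ s + y ^ s` for a gap of length
`g` flanked by bridges of lengths `x, y ≥ τ g`. Splitting a bridge at the first gap that meets it
and recursing, every finite cover of `C` by open intervals `I` satisfies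
`∑ |I| ^ s ≥ |conv C| ^ s / 2`: an interval straddling the splitting gap is charged once for each
of the two overhangs it leaves in the halves, which the two halves then regard as already covered.
Thickening an arbitrary countable cover to open intervals and using compactness, this bounds
the `s`-dimensional Hausdorff measure of `C` away from zero.
-/

open Set

/-- The gaps of a Cantor set `C ⊂ ℝ`: the connected components of `I ∖ C`, where
`I = [inf C, sup C]` is the convex hull of `C`. -/
noncomputable def gapSet (C : Set ℝ) : Set (Set ℝ) :=
  {U | ∃ x ∈ Icc (sInf C) (sSup C) \ C,
        U = connectedComponentIn (Icc (sInf C) (sSup C) \ C) x}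

open scoped Finset MeasureTheory

lemma two_rpow_sub_one_mul_rpow_add_rpow_le {p a b : ℝ} (hp : 1 ≤ p) (ha : 0 ≤ a) (hab : a ≤ b) :
    (2 ^ p - 1) * a ^ p + b ^ p ≤ (a + b) ^ p := by
  rcases hab.eq_or_lt with rfl | hb
  · rw [← two_mul, Real.mul_rpow zero_le_two ha]; linarith
  have hb0 : 0 < b := ha.trans_lt hb
  have hf := convexOn_rpow hp
  have hw₁ : 0 ≤ a / b := div_nonneg ha hb0.le
  have hw₂ : 0 ≤ 1 - a / b := by rw [sub_nonneg, div_le_one hb0]; exact hab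
  have hmem : a + b ∈ Ici (0 : ℝ) := by simp only [mem_Ici]; linarith
  -- `2a` and `b` both lie in `[a, a + b]`, with mirror-image convex weights
  have h₁ := hf.2 ha hmem hw₂ hw₁ (by ring)
  have h₂ := hf.2 ha hmem hw₁ hw₂ (by ring)
  simp only [smul_eq_mul] at h₁ h₂
  rw [show (1 - a / b) * a + a / b * (a + b) = 2 * a by field_simp; ring,
    Real.mul_rpow zero_le_two ha] at h₁
  rw [show a / b * a + (1 - a / b) * (a + b) = b by field_simp; ring] at h₂
  linarith

lemma one_lt_one_div_of_two_add_le {τ s : ℝ} (hτ : 0 < τ) (hsτ : 2 + 1 / τ ≤ 2 ^ (1 / s)) :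
    1 < 1 / s := by
  have : (2 : ℝ) ^ (1 : ℝ) < 2 ^ (1 / s) := by
    rw [Real.rpow_one]; linarith [one_div_pos.mpr hτ]
  exact (Real.rpow_lt_rpow_left_iff one_lt_two).mp this

lemma rpow_add_add_le_of_le_mul {τ s x y g : ℝ} (hτ : 0 < τ) (hs : 0 < s)
    (hsτ : 2 + 1 / τ ≤ 2 ^ (1 / s)) (hg : 0 ≤ g) (hx : τ * g ≤ x) (hy : τ * g ≤ y) :
    (x + g + y) ^ s ≤ x ^ s + y ^ s := by
  wlog hxy : x ≤ y generalizing x y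
  · convert this hy hx (le_of_not_ge hxy) using 1 <;> ring_nf
  have hx0 : 0 ≤ x := (mul_nonneg hτ.le hg).trans hx
  have hy0 : 0 ≤ y := hx0.trans hxy
  have hp := (one_lt_one_div_of_two_add_le hτ hsτ).le
  have hinv : ∀ z : ℝ, 0 ≤ z → (z ^ s) ^ (1 / s) = z := fun z hz => by
    rw [← Real.rpow_mul hz, mul_one_div_cancel hs.ne', Real.rpow_one]
  have hsum : x + g + y ≤ (x ^ s + y ^ s) ^ (1 / s) := by
    have hgx : g ≤ x * (1 / τ) := by rw [mul_one_div, le_div_iff₀ hτ]; linarith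
    have := two_rpow_sub_one_mul_rpow_add_rpow_le hp (Real.rpow_nonneg hx0 s)
      (Real.rpow_le_rpow hx0 hxy hs.le)
    rw [hinv x hx0, hinv y hy0] at this
    nlinarith
  calc (x + g + y) ^ s ≤ ((x ^ s + y ^ s) ^ (1 / s)) ^ s :=
        Real.rpow_le_rpow (by linarith) hsum hs.le
    _ = x ^ s + y ^ s := by
        rw [← Real.rpow_mul (add_nonneg (Real.rpow_nonneg hx0 s) (Real.rpow_nonneg hy0 s)),
          one_div_mul_cancel hs.ne', Real.rpow_one]

open Finset in
lemma exists_overhang {s p q : ℝ} (hs : 0 < s) (hpq : p ≤ q) (X : Finset (ℝ × ℝ))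
    (hX : ∀ v ∈ X, v.1 < p ∧ q < v.2) :
    ∃ dL dR : ℝ, 0 ≤ dL ∧ 0 ≤ dR ∧ (∀ v ∈ X, p - dL ≤ v.1 ∧ v.2 ≤ q + dR) ∧
      dL ^ s + dR ^ s ≤ 2 * ∑ v ∈ X, (v.2 - v.1) ^ s ∧ (X.Nonempty ∨ dL = 0 ∧ dR = 0) := by
  rcases X.eq_empty_or_nonempty with rfl | hne
  · exact ⟨0, 0, le_rfl, le_rfl, by simp, by simp [Real.zero_rpow hs.ne'], Or.inr ⟨rfl, rfl⟩⟩
  obtain ⟨v₁, hv₁, h₁⟩ := X.exists_min_image Prod.fst hne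
  obtain ⟨v₂, hv₂, h₂⟩ := X.exists_max_image Prod.snd hne
  have hnn : ∀ v ∈ X, 0 ≤ (v.2 - v.1) ^ s := fun v hv =>
    Real.rpow_nonneg (by linarith [hX v hv]) s
  have hpay₁ : (p - v₁.1) ^ s ≤ ∑ v ∈ X, (v.2 - v.1) ^ s :=
    (Real.rpow_le_rpow (by linarith [hX v₁ hv₁]) (by linarith [hX v₁ hv₁]) hs.le).trans
      (single_le_sum hnn hv₁)
  have hpay₂ : (v₂.2 - q) ^ s ≤ ∑ v ∈ X, (v.2 - v.1) ^ s :=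
    (Real.rpow_le_rpow (by linarith [hX v₂ hv₂]) (by linarith [hX v₂ hv₂]) hs.le).trans
      (single_le_sum hnn hv₂)
  refine ⟨p - v₁.1, v₂.2 - q, by linarith [hX v₁ hv₁], by linarith [hX v₂ hv₂],
    fun v hv => ⟨by linarith [h₁ v hv], by linarith [h₂ v hv]⟩, by linarith, Or.inl hne⟩

open Finset in
lemma sum_eq_sum_filter_add_sum_filter_add_sum_filter {M : Type*} [AddCommMonoid M]
    (L : Finset (ℝ × ℝ)) (p q : ℝ) (f : ℝ × ℝ → M) :
    ∑ v ∈ L, f v = ∑ v ∈ L.filter (·.2 ≤ q), f v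
      + ∑ v ∈ L.filter (fun v => ¬v.2 ≤ q ∧ v.1 < p), f v
      + ∑ v ∈ L.filter (fun v => ¬v.2 ≤ q ∧ ¬v.1 < p), f v := by
  rw [add_assoc, ← sum_filter_add_sum_filter_not L (·.2 ≤ q),
    ← sum_filter_add_sum_filter_not (L.filter fun v => ¬v.2 ≤ q) (·.1 < p),
    filter_filter, filter_filter]

lemma ite_pos_le_one (x : ℝ) : (if 0 < x then 1 else 0 : ℕ) ≤ 1 := by split_ifs <;> simp

def IsIntervalCover (L : Finset (ℝ × ℝ)) (S : Set ℝ) : Prop :=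
  (∀ v ∈ L, v.1 < v.2) ∧ S ⊆ ⋃ v ∈ L, Ioo v.1 v.2

lemma IsIntervalCover.exists_mem {L : Finset (ℝ × ℝ)} {S : Set ℝ} (h : IsIntervalCover L S)
    {z : ℝ} (hz : z ∈ S) : ∃ v ∈ L, z ∈ Ioo v.1 v.2 := by
  obtain ⟨v, hv, hzv⟩ := mem_iUnion₂.mp (h.2 hz)
  exact ⟨v, hv, hzv⟩

lemma IsIntervalCover.filter {L : Finset (ℝ × ℝ)} {S T : Set ℝ} (h : IsIntervalCover L S)
    (p : ℝ × ℝ → Prop) [DecidablePred p] (hTS : T ⊆ S)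
    (hp : ∀ z ∈ T, ∀ v ∈ L, z ∈ Ioo v.1 v.2 → p v) : IsIntervalCover (L.filter p) T := by
  refine ⟨fun v hv => h.1 v (Finset.mem_filter.mp hv).1, fun z hz => ?_⟩
  obtain ⟨v, hv, hzv⟩ := h.exists_mem (hTS hz)
  exact mem_iUnion₂.mpr ⟨v, Finset.mem_filter.mpr ⟨hv, hp z hz v hv hzv⟩, hzv⟩

open Finset in
/-- Thickening each `t n` to an open interval by a margin summable in the `s`-th power, a finite
subcover of the compact set `K` costs at most `η` more than the diameters of the `t n`. -/
lemma exists_isIntervalCover_sum_rpow_le {K : Set ℝ} (hK : IsCompact K) {s η : ℝ} (hs : 0 < s)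
    (hs1 : s ≤ 1) (hη : 0 < η) {t : ℕ → Set ℝ} (ht : K ⊆ ⋃ n, t n)
    (hbdd : ∀ n, Bornology.IsBounded (t n)) :
    ∃ (L : Finset (ℝ × ℝ)) (F : Finset ℕ), IsIntervalCover L K ∧
      ∑ v ∈ L, (v.2 - v.1) ^ s ≤ ∑ n ∈ F, (sSup (t n) - sInf (t n)) ^ s + η := by
  set ε : ℕ → ℝ := fun n => (η / 2 / 2 ^ n) ^ s⁻¹ / 2
  have hε : ∀ n, 0 < ε n := fun n => by positivity
  have hεs : ∀ n, (2 * ε n) ^ s = η / 2 / 2 ^ n := fun n => by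
    rw [mul_div_cancel₀ _ two_ne_zero, Real.rpow_inv_rpow (by positivity) hs.ne']
  have hD : ∀ n, 0 ≤ sSup (t n) - sInf (t n) := fun n =>
    sub_nonneg.mpr (Real.sInf_le_sSup _ (hbdd n).bddBelow (hbdd n).bddAbove)
  set I : ℕ → ℝ × ℝ := fun n => (sInf (t n) - ε n, sSup (t n) + ε n)
  have hIlen : ∀ n, (I n).2 - (I n).1 = (sSup (t n) - sInf (t n)) + 2 * ε n := fun n => by
    simp only [I]; ring
  obtain ⟨F, hF⟩ := hK.elim_finite_subcover (fun n => Ioo (I n).1 (I n).2)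
    (fun _ => isOpen_Ioo) fun x hx => by
      obtain ⟨n, hn⟩ := mem_iUnion.mp (ht hx)
      have := (hbdd n).subset_Icc_sInf_sSup hn
      exact mem_iUnion.mpr ⟨n, by linarith [this.1, hε n], by linarith [this.2, hε n]⟩
  have hlen_nn : ∀ n, 0 ≤ ((I n).2 - (I n).1) ^ s := fun n =>
    Real.rpow_nonneg (by linarith [hIlen n, hD n, hε n]) s
  refine ⟨F.image I, F, ⟨fun v hv => ?_, fun x hx => ?_⟩, ?_⟩
  · obtain ⟨n, -, rfl⟩ := mem_image.mp hv
    linarith [hIlen n, hD n, hε n]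
  · obtain ⟨n, hn, hxn⟩ := mem_iUnion₂.mp (hF hx)
    exact mem_iUnion₂.mpr ⟨I n, mem_image_of_mem I hn, hxn⟩
  calc ∑ v ∈ F.image I, (v.2 - v.1) ^ s ≤ ∑ n ∈ F, ((I n).2 - (I n).1) ^ s :=
        sum_image_le_of_nonneg fun v hv => by
          obtain ⟨n, -, rfl⟩ := mem_image.mp hv
          exact hlen_nn n
    _ ≤ ∑ n ∈ F, ((sSup (t n) - sInf (t n)) ^ s + η / 2 / 2 ^ n) := sum_le_sum fun n _ => by
        rw [hIlen n, ← hεs n]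
        exact Real.rpow_add_le_add_rpow (hD n) (by linarith [hε n]) hs.le hs1
    _ ≤ ∑ n ∈ F, (sSup (t n) - sInf (t n)) ^ s + η := by
        have := (summable_geometric_two' η).sum_le_tsum F fun n _ => by positivity
        rw [tsum_geometric_two'] at this
        rw [sum_add_distrib]
        linarith

open Finset in
lemma ofReal_le_tsum_ediam_rpow {K : Set ℝ} (hK : IsCompact K) {s M : ℝ} (hs : 0 < s)
    (hs1 : s ≤ 1) (hM : 0 < M)
    (hcov : ∀ L : Finset (ℝ × ℝ), IsIntervalCover L K → M ≤ ∑ v ∈ L, (v.2 - v.1) ^ s)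
    {t : ℕ → Set ℝ} (ht : K ⊆ ⋃ n, t n) :
    ENNReal.ofReal (M / 2) ≤ ∑' n, ⨆ _ : (t n).Nonempty, Metric.ediam (t n) ^ s := by
  by_contra! hlt
  have hbdd : ∀ n, Bornology.IsBounded (t n) := fun n => by
    rcases (t n).eq_empty_or_nonempty with he | hne
    · simp [he]
    by_contra hb
    have : ⊤ ≤ ∑' n, ⨆ _ : (t n).Nonempty, Metric.ediam (t n) ^ s := by
      calc ⊤ = ⨆ _ : (t n).Nonempty, Metric.ediam (t n) ^ s := by
            rw [iSup_pos hne, Metric.ediam_eq_top_iff_unbounded.mpr hb,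
              ENNReal.top_rpow_of_pos hs]
        _ ≤ _ := ENNReal.le_tsum n
    exact not_top_lt (this.trans_lt hlt)
  have hD : ∀ n, 0 ≤ sSup (t n) - sInf (t n) := fun n =>
    sub_nonneg.mpr (Real.sInf_le_sSup _ (hbdd n).bddBelow (hbdd n).bddAbove)
  obtain ⟨L, F, hL, hsum⟩ :=
    exists_isIntervalCover_sum_rpow_le hK hs hs1 (by positivity : 0 < M / 4) ht hbdd
  have hF : ∑ n ∈ F, (sSup (t n) - sInf (t n)) ^ s < M / 2 := by
    rw [← ENNReal.ofReal_lt_ofReal_iff (by positivity),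
      ENNReal.ofReal_sum_of_nonneg fun n _ => Real.rpow_nonneg (hD n) s]
    refine lt_of_le_of_lt ?_ hlt
    refine (sum_le_sum fun n _ => ?_).trans (ENNReal.sum_le_tsum F)
    rcases (t n).eq_empty_or_nonempty with he | hne
    · simp [he, Real.zero_rpow hs.ne']
    rw [iSup_pos hne, Real.ediam_eq (hbdd n), ENNReal.ofReal_rpow_of_nonneg (hD n) hs.le]
  linarith [hcov L hL]

theorem ofReal_le_dimH_of_forall_isIntervalCover {K : Set ℝ} (hK : IsCompact K) {s M : ℝ}
    (hs : 0 < s) (hs1 : s ≤ 1) (hM : 0 < M)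
    (hcov : ∀ L : Finset (ℝ × ℝ), IsIntervalCover L K → M ≤ ∑ v ∈ L, (v.2 - v.1) ^ s) :
    ENNReal.ofReal s ≤ dimH K := by
  have hμ : ENNReal.ofReal (M / 2) ≤ μH[s] K := by
    rw [MeasureTheory.Measure.hausdorffMeasure_apply]
    exact le_iSup₂_of_le 1 one_pos <| le_iInf₂ fun t ht => le_iInf fun _ =>
      ofReal_le_tsum_ediam_rpow hK hs hs1 hM hcov ht
  have hne : μH[(s.toNNReal : ℝ)] K ≠ 0 := by
    rw [Real.coe_toNNReal s hs.le]
    exact (ENNReal.ofReal_pos.mpr (by positivity)).trans_le hμ |>.ne'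
  exact le_dimH_of_hausdorffMeasure_ne_zero hne

/-- A presentation of the gaps of `C ⊆ [a, b]` as open intervals `(lo k, hi k)`, with thickness
at least `τ`: the bridge on either side of the gap `k`, which at stage `k` reaches at most to `a`
(resp. `b`) or to an earlier gap, is at least `τ` times as long as the gap. -/
structure ThickPresentation (C : Set ℝ) (a b τ : ℝ) where
  lo : ℕ → ℝ
  hi : ℕ → ℝ
  lo_lt_hi : ∀ k, lo k < hi k
  lo_mem : ∀ k, lo k ∈ C
  hi_mem : ∀ k, hi k ∈ C
  notMem_of_mem_Ioo : ∀ k, ∀ x ∈ Ioo (lo k) (hi k), x ∉ C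
  exists_mem_Ioo : ∀ x ∈ Icc a b, x ∉ C → ∃ k, x ∈ Ioo (lo k) (hi k)
  exists_notMem_Ioo : ∀ ⦃x y : ℝ⦄, x < y → ∃ z ∈ Ioo x y, z ∉ C
  left_mem : a ∈ C
  right_mem : b ∈ C
  subset_Icc : C ⊆ Icc a b
  thick_left_of_end : ∀ k, τ * (hi k - lo k) ≤ lo k - a
  thick_left : ∀ k, ∀ i ≤ k, hi i ≤ lo k → τ * (hi k - lo k) ≤ lo k - hi i
  thick_right_of_end : ∀ k, τ * (hi k - lo k) ≤ b - hi k
  thick_right : ∀ k, ∀ i ≤ k, hi k ≤ lo i → τ * (hi k - lo k) ≤ lo i - hi k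

namespace ThickPresentation

variable {C : Set ℝ} {a b τ s : ℝ}

section Basic

variable (P : ThickPresentation C a b τ)

def IsLeftEnd (j : ℕ) (α : ℝ) : Prop := α = a ∨ ∃ i < j, α = P.hi i

def IsRightEnd (j : ℕ) (β : ℝ) : Prop := β = b ∨ ∃ i < j, β = P.lo i

variable {P} {j k : ℕ} {x y α β : ℝ}

lemma IsLeftEnd.mem (h : P.IsLeftEnd j α) : α ∈ C := by
  rcases h with rfl | ⟨i, -, rfl⟩
  exacts [P.left_mem, P.hi_mem i]

lemma IsRightEnd.mem (h : P.IsRightEnd j β) : β ∈ C := by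
  rcases h with rfl | ⟨i, -, rfl⟩
  exacts [P.right_mem, P.lo_mem i]

lemma IsLeftEnd.mono (h : P.IsLeftEnd j α) (hj : j ≤ k) : P.IsLeftEnd k α :=
  h.imp_right fun ⟨i, hi, he⟩ => ⟨i, hi.trans_le hj, he⟩

lemma IsRightEnd.mono (h : P.IsRightEnd j β) (hj : j ≤ k) : P.IsRightEnd k β :=
  h.imp_right fun ⟨i, hi, he⟩ => ⟨i, hi.trans_le hj, he⟩

lemma isLeftEnd_hi (k : ℕ) : P.IsLeftEnd (k + 1) (P.hi k) := Or.inr ⟨k, k.lt_succ_self, rfl⟩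

lemma isRightEnd_lo (k : ℕ) : P.IsRightEnd (k + 1) (P.lo k) := Or.inr ⟨k, k.lt_succ_self, rfl⟩

lemma IsLeftEnd.mul_le (h : P.IsLeftEnd j α) (hjk : j ≤ k) (hα : α ≤ P.lo k) :
    τ * (P.hi k - P.lo k) ≤ P.lo k - α := by
  rcases h with rfl | ⟨i, hi, rfl⟩
  exacts [P.thick_left_of_end k, P.thick_left k i (by omega) hα]

lemma IsRightEnd.mul_le (h : P.IsRightEnd j β) (hjk : j ≤ k) (hβ : P.hi k ≤ β) :
    τ * (P.hi k - P.lo k) ≤ β - P.hi k := by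
  rcases h with rfl | ⟨i, hi, rfl⟩
  exacts [P.thick_right_of_end k, P.thick_right k i (by omega) hβ]

lemma le_lo_of_lt_hi (hx : x ∈ C) (h : x < P.hi k) : x ≤ P.lo k :=
  not_lt.mp fun h' => P.notMem_of_mem_Ioo k x ⟨h', h⟩ hx

lemma hi_le_of_lo_lt (hx : x ∈ C) (h : P.lo k < x) : P.hi k ≤ x :=
  not_lt.mp fun h' => P.notMem_of_mem_Ioo k x ⟨h, h'⟩ hx

/-- Positive thickness forbids two gaps to share an endpoint: the bridge between them,
at the stage of the later one, would have length zero. -/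
lemma hi_ne_lo (hτ : 0 < τ) (i k : ℕ) : P.hi i ≠ P.lo k := by
  intro h
  have hk := mul_pos hτ (sub_pos.mpr (P.lo_lt_hi k))
  have hi := mul_pos hτ (sub_pos.mpr (P.lo_lt_hi i))
  rcases le_total i k with hik | hki
  · linarith [P.thick_left k i hik h.le]
  · linarith [P.thick_right i k hki h.le]

lemma exists_gap_superset (hxy : x < y) (hax : a ≤ x) (hyb : y ≤ b) (h : C ∩ Ioo x y = ∅) :
    ∃ i, P.lo i ≤ x ∧ y ≤ P.hi i := by
  have hz : (x + y) / 2 ∈ Ioo x y := ⟨by linarith, by linarith⟩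
  have hzC : (x + y) / 2 ∉ C := fun hC => h.subset ⟨hC, hz⟩
  obtain ⟨i, hi⟩ := P.exists_mem_Ioo _ ⟨by linarith [hz.1], by linarith [hz.2]⟩ hzC
  refine ⟨i, not_lt.mp fun hlt => ?_, not_lt.mp fun hlt => ?_⟩
  · exact h.subset ⟨P.lo_mem i, hlt, hi.1.trans hz.2⟩
  · exact h.subset ⟨P.hi_mem i, hz.1.trans hi.2, hlt⟩

lemma nonempty_inter_Ioo_lo (hτ : 0 < τ) (hx : x < P.lo k) (hax : a ≤ x) :
    (C ∩ Ioo x (P.lo k)).Nonempty := by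
  by_contra h
  obtain ⟨i, hi, hk⟩ := P.exists_gap_superset hx hax (P.subset_Icc (P.lo_mem k)).2
    (not_nonempty_iff_eq_empty.mp h)
  exact P.hi_ne_lo hτ i k (le_antisymm (P.hi_le_of_lo_lt (P.lo_mem k) (hi.trans_lt hx)) hk)

lemma nonempty_inter_Ioo_hi (hτ : 0 < τ) (hy : P.hi k < y) (hyb : y ≤ b) :
    (C ∩ Ioo (P.hi k) y).Nonempty := by
  by_contra h
  obtain ⟨i, hi, hk⟩ := P.exists_gap_superset hy (P.subset_Icc (P.hi_mem k)).1 hyb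
    (not_nonempty_iff_eq_empty.mp h)
  exact P.hi_ne_lo hτ k i (le_antisymm hi (P.le_lo_of_lt_hi (P.hi_mem k) (hy.trans_le hk))).symm

end Basic

variable {P : ThickPresentation C a b τ} {j k : ℕ} {α β : ℝ}

lemma rpow_sub_le_of_gap (hτ : 0 < τ) (hs : 0 < s) (hsτ : 2 + 1 / τ ≤ 2 ^ (1 / s))
    (hα : P.IsLeftEnd j α) (hβ : P.IsRightEnd j β) (hjk : j ≤ k) (hlo : α ≤ P.lo k)
    (hhi : P.hi k ≤ β) : (β - α) ^ s ≤ (P.lo k - α) ^ s + (β - P.hi k) ^ s := by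
  have key := rpow_add_add_le_of_le_mul hτ hs hsτ (sub_pos.mpr (P.lo_lt_hi k)).le
    (hα.mul_le hjk hlo) (hβ.mul_le hjk hhi)
  rwa [show P.lo k - α + (P.hi k - P.lo k) + (β - P.hi k) = β - α by ring] at key

variable (P) in
/-- A bridge `[α, β]` of stage `j` whose two ends are already paid for up to depth `ℓ` and `r`;
no gap of index `< j` meets the remaining middle part `(α + ℓ, β - r)`. -/
structure Block where
  j : ℕ
  α : ℝ
  β : ℝ
  ℓ : ℝ
  r : ℝ
  isLeftEnd : P.IsLeftEnd j α
  isRightEnd : P.IsRightEnd j β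
  le : α ≤ β
  ℓ_nonneg : 0 ≤ ℓ
  r_nonneg : 0 ≤ r
  earlier_gap : ∀ i < j, P.hi i ≤ α + ℓ ∨ β - r ≤ P.lo i

namespace Block

open Finset

variable (B : P.Block)

def middle : Set ℝ := Ioo (B.α + B.ℓ) (B.β - B.r)

def Meets (k : ℕ) : Prop := B.α + B.ℓ < P.hi k ∧ P.lo k < B.β - B.r

/-- The termination measure of the covering argument, together with `2 * #L`. -/
noncomputable def weight : ℕ := (if 0 < B.ℓ then 1 else 0) + (if 0 < B.r then 1 else 0)

variable {B} {L : Finset (ℝ × ℝ)}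

lemma j_le (hk : B.Meets k) : B.j ≤ k :=
  not_lt.mp fun h => (B.earlier_gap k h).elim (fun h' => hk.1.not_ge h') (fun h' => hk.2.not_ge h')

lemma α_le_lo (hk : B.Meets k) : B.α ≤ P.lo k :=
  P.le_lo_of_lt_hi B.isLeftEnd.mem (by linarith [hk.1, B.ℓ_nonneg])

lemma hi_le_β (hk : B.Meets k) : P.hi k ≤ B.β :=
  P.hi_le_of_lo_lt B.isRightEnd.mem (by linarith [hk.2, B.r_nonneg])

lemma rpow_le_of_inter_middle_eq_empty (hτ : 0 < τ) (hs : 0 < s)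
    (hsτ : 2 + 1 / τ ≤ 2 ^ (1 / s)) (h : C ∩ B.middle = ∅) :
    (B.β - B.α) ^ s ≤ B.ℓ ^ s + B.r ^ s := by
  have hℓ := B.ℓ_nonneg
  have hr := B.r_nonneg
  have ha : a ≤ B.α := (P.subset_Icc B.isLeftEnd.mem).1
  have hb : B.β ≤ b := (P.subset_Icc B.isRightEnd.mem).2
  have hs1 : s ≤ 1 := ((one_lt_div hs).mp (one_lt_one_div_of_two_add_le hτ hsτ)).le
  rcases le_or_gt (B.β - B.r) (B.α + B.ℓ) with hle | hlt
  · calc (B.β - B.α) ^ s ≤ (B.ℓ + B.r) ^ s :=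
          Real.rpow_le_rpow (sub_nonneg.mpr B.le) (by linarith) hs.le
      _ ≤ B.ℓ ^ s + B.r ^ s := Real.rpow_add_le_add_rpow hℓ hr hs.le hs1
  -- the middle part lies inside a single gap, which splits `[α, β]`
  obtain ⟨k, hlo, hhi⟩ := P.exists_gap_superset hlt (by linarith) (by linarith) h
  have hk : B.Meets k := ⟨by linarith [P.lo_lt_hi k], by linarith [P.lo_lt_hi k]⟩
  have hα := α_le_lo hk
  have hβ := hi_le_β hk
  calc (B.β - B.α) ^ s ≤ (P.lo k - B.α) ^ s + (B.β - P.hi k) ^ s :=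
        rpow_sub_le_of_gap hτ hs hsτ B.isLeftEnd B.isRightEnd (j_le hk) hα hβ
    _ ≤ B.ℓ ^ s + B.r ^ s := add_le_add
        (Real.rpow_le_rpow (by linarith) (by linarith) hs.le)
        (Real.rpow_le_rpow (by linarith) (by linarith) hs.le)

lemma exists_meets (h : (C ∩ B.middle).Nonempty) : ∃ k, B.Meets k := by
  obtain ⟨w, -, hw⟩ := h
  have hlt : B.α + B.ℓ < B.β - B.r := hw.1.trans hw.2
  obtain ⟨z, hz, hzC⟩ := P.exists_notMem_Ioo hlt
  obtain ⟨k, hk⟩ := P.exists_mem_Ioo z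
    ⟨by linarith [(P.subset_Icc B.isLeftEnd.mem).1, B.ℓ_nonneg, hz.1],
      by linarith [(P.subset_Icc B.isRightEnd.mem).2, B.r_nonneg, hz.2]⟩ hzC
  exact ⟨k, hz.1.trans hk.2, hk.1.trans hz.2⟩

def leftChild (hk : B.Meets k) (hmin : ∀ i < k, ¬B.Meets i) (d : ℝ) (hd : 0 ≤ d) :
    P.Block where
  j := k + 1
  α := B.α
  β := P.lo k
  ℓ := B.ℓ
  r := d
  isLeftEnd := B.isLeftEnd.mono ((j_le hk).trans k.le_succ)
  isRightEnd := P.isRightEnd_lo k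
  le := α_le_lo hk
  ℓ_nonneg := B.ℓ_nonneg
  r_nonneg := hd
  earlier_gap i hi := by
    rcases Nat.lt_succ_iff_lt_or_eq.mp hi with hi | rfl
    · rcases not_and_or.mp (hmin i hi) with h | h
      · exact Or.inl (not_lt.mp h)
      · exact Or.inr (by linarith [not_lt.mp h, hk.2])
    · exact Or.inr (by linarith)

def rightChild (hk : B.Meets k) (hmin : ∀ i < k, ¬B.Meets i) (d : ℝ) (hd : 0 ≤ d) :
    P.Block where
  j := k + 1
  α := P.hi k
  β := B.β
  ℓ := d
  r := B.r
  isLeftEnd := P.isLeftEnd_hi k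
  isRightEnd := B.isRightEnd.mono ((j_le hk).trans k.le_succ)
  le := hi_le_β hk
  ℓ_nonneg := hd
  r_nonneg := B.r_nonneg
  earlier_gap i hi := by
    rcases Nat.lt_succ_iff_lt_or_eq.mp hi with hi | rfl
    · rcases not_and_or.mp (hmin i hi) with h | h
      · exact Or.inl (by linarith [not_lt.mp h, hk.1])
      · exact Or.inr (not_lt.mp h)
    · exact Or.inl (by linarith)

lemma α_lt_lo (hτ : 0 < τ) (hk : B.Meets k) : B.α < P.lo k := by
  have := B.isLeftEnd.mul_le (j_le hk) (α_le_lo hk)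
  nlinarith [P.lo_lt_hi k]

lemma hi_lt_β (hτ : 0 < τ) (hk : B.Meets k) : P.hi k < B.β := by
  have := B.isRightEnd.mul_le (j_le hk) (hi_le_β hk)
  nlinarith [P.lo_lt_hi k]

lemma pos_ℓ_or_exists_fst_lt (hτ : 0 < τ) (hL : IsIntervalCover L (C ∩ B.middle))
    (hk : B.Meets k) : 0 < B.ℓ ∨ ∃ v ∈ L, v.1 < P.lo k := by
  rcases B.ℓ_nonneg.lt_or_eq with h | h
  · exact Or.inl h
  obtain ⟨z, hzC, hz⟩ := P.nonempty_inter_Ioo_lo hτ (α_lt_lo hτ hk)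
    (P.subset_Icc B.isLeftEnd.mem).1
  obtain ⟨v, hv, hzv⟩ := hL.exists_mem ⟨hzC, by linarith [hz.1], by linarith [hz.2, hk.2]⟩
  exact Or.inr ⟨v, hv, hzv.1.trans hz.2⟩

lemma pos_r_or_exists_lt_snd (hτ : 0 < τ) (hL : IsIntervalCover L (C ∩ B.middle))
    (hk : B.Meets k) : 0 < B.r ∨ ∃ v ∈ L, P.hi k < v.2 := by
  rcases B.r_nonneg.lt_or_eq with h | h
  · exact Or.inl h
  obtain ⟨z, hzC, hz⟩ := P.nonempty_inter_Ioo_hi hτ (hi_lt_β hτ hk)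
    (P.subset_Icc B.isRightEnd.mem).2
  obtain ⟨v, hv, hzv⟩ := hL.exists_mem ⟨hzC, by linarith [hz.1, hk.1], by linarith [hz.2]⟩
  exact Or.inr ⟨v, hv, hz.1.trans hzv.2⟩

lemma isIntervalCover_leftChild (hL : IsIntervalCover L (C ∩ B.middle)) (hk : B.Meets k)
    (hmin : ∀ i < k, ¬B.Meets i) {d : ℝ} (hd : 0 ≤ d)
    (hX : ∀ v ∈ L, v.1 < P.lo k → P.hi k < v.2 → P.lo k - d ≤ v.1) :
    IsIntervalCover (L.filter (·.2 ≤ P.hi k)) (C ∩ (leftChild hk hmin d hd).middle) := by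
  have hsub : P.lo k - d ≤ B.β - B.r := by linarith [hk.2]
  refine hL.filter _ (inter_subset_inter_right C (Ioo_subset_Ioo le_rfl hsub))
    fun z hz v hv hzv => not_lt.mp fun hlt => ?_
  have hz' : z < P.lo k - d := hz.2.2
  rcases lt_or_ge v.1 (P.lo k) with h | h
  · linarith [hX v hv h hlt, hzv.1]
  · linarith [hzv.1]

lemma isIntervalCover_rightChild (hL : IsIntervalCover L (C ∩ B.middle)) (hk : B.Meets k)
    (hmin : ∀ i < k, ¬B.Meets i) {d : ℝ} (hd : 0 ≤ d)
    (hX : ∀ v ∈ L, v.1 < P.lo k → P.hi k < v.2 → v.2 ≤ P.hi k + d) :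
    IsIntervalCover (L.filter fun v => ¬v.2 ≤ P.hi k ∧ ¬v.1 < P.lo k)
      (C ∩ (rightChild hk hmin d hd).middle) := by
  have hsub : B.α + B.ℓ ≤ P.hi k + d := by linarith [hk.1]
  refine hL.filter _ (inter_subset_inter_right C (Ioo_subset_Ioo hsub le_rfl))
    fun z hz v hv hzv => ?_
  have hz' : P.hi k + d < z := hz.2.1
  have h2 : P.hi k < v.2 := by linarith [hzv.2]
  exact ⟨not_le.mpr h2, fun h1 => by linarith [hX v hv h1 h2, hzv.2]⟩

lemma weight_leftChild_lt (hk : B.Meets k) (hmin : ∀ i < k, ¬B.Meets i) {d : ℝ} (hd : 0 ≤ d)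
    {n nℓ nx : ℕ} (hn : nℓ + nx ≤ n) (hd0 : 0 < nx ∨ d = 0) (hr : 0 < B.r ∨ nℓ < n) :
    2 * nℓ + (leftChild hk hmin d hd).weight < 2 * n + B.weight := by
  have := ite_pos_le_one B.ℓ
  have := ite_pos_le_one d
  have := hr.imp_left fun h => (if_pos h : (if 0 < B.r then 1 else 0 : ℕ) = 1)
  have := hd0.imp_right fun h => (by simp [h] : (if 0 < d then 1 else 0 : ℕ) = 0)
  dsimp only [weight, leftChild]
  omega

lemma weight_rightChild_lt (hk : B.Meets k) (hmin : ∀ i < k, ¬B.Meets i) {d : ℝ} (hd : 0 ≤ d)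
    {n nr nx : ℕ} (hn : nr + nx ≤ n) (hd0 : 0 < nx ∨ d = 0) (hℓ : 0 < B.ℓ ∨ nr < n) :
    2 * nr + (rightChild hk hmin d hd).weight < 2 * n + B.weight := by
  have := ite_pos_le_one B.r
  have := ite_pos_le_one d
  have := hℓ.imp_left fun h => (if_pos h : (if 0 < B.ℓ then 1 else 0 : ℕ) = 1)
  have := hd0.imp_right fun h => (by simp [h] : (if 0 < d then 1 else 0 : ℕ) = 0)
  dsimp only [weight, rightChild]
  omega

/-- Split `[α, β]` at the first gap meeting its middle part; an interval crossing that gap is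
charged twice, once for each overhang it leaves in the two children. -/
lemma rpow_le_of_forall_lt (hτ : 0 < τ) (hs : 0 < s) (hsτ : 2 + 1 / τ ≤ 2 ^ (1 / s))
    (B : P.Block) (L : Finset (ℝ × ℝ)) (hL : IsIntervalCover L (C ∩ B.middle))
    (ih : ∀ (B' : P.Block) (L' : Finset (ℝ × ℝ)), 2 * #L' + B'.weight < 2 * #L + B.weight →
      IsIntervalCover L' (C ∩ B'.middle) →
      (B'.β - B'.α) ^ s ≤ 2 * ∑ v ∈ L', (v.2 - v.1) ^ s + B'.ℓ ^ s + B'.r ^ s) :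
    (B.β - B.α) ^ s ≤ 2 * ∑ v ∈ L, (v.2 - v.1) ^ s + B.ℓ ^ s + B.r ^ s := by
  classical
  have hnn : 0 ≤ ∑ v ∈ L, (v.2 - v.1) ^ s :=
    sum_nonneg fun v hv => Real.rpow_nonneg (by linarith [hL.1 v hv]) s
  rcases (C ∩ B.middle).eq_empty_or_nonempty with hC | hC
  · linarith [rpow_le_of_inter_middle_eq_empty hτ hs hsτ hC]
  have hex := exists_meets hC
  have hk : B.Meets (Nat.find hex) := Nat.find_spec hex
  have hmin : ∀ i < Nat.find hex, ¬B.Meets i := fun i => Nat.find_min hex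
  set k := Nat.find hex
  set Lℓ := L.filter (·.2 ≤ P.hi k)
  set Lx := L.filter fun v => ¬v.2 ≤ P.hi k ∧ v.1 < P.lo k
  set Lr := L.filter fun v => ¬v.2 ≤ P.hi k ∧ ¬v.1 < P.lo k
  have hmem : ∀ v ∈ L, v.1 < P.lo k → P.hi k < v.2 → v ∈ Lx := fun v hv h1 h2 =>
    mem_filter.mpr ⟨hv, not_le.mpr h2, h1⟩
  obtain ⟨dL, dR, hdL, hdR, hX, hpay, hdzero⟩ := exists_overhang hs (P.lo_lt_hi k).le Lx
    fun v hv => ⟨(mem_filter.mp hv).2.2, not_le.mp (mem_filter.mp hv).2.1⟩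
  have hcard : #L = #Lℓ + #Lx + #Lr := by
    simpa only [card_eq_sum_ones] using
      sum_eq_sum_filter_add_sum_filter_add_sum_filter L (P.lo k) (P.hi k) fun _ => 1
  have hd0 := hdzero.imp_left card_pos.mpr
  have hleft := ih (leftChild hk hmin dL hdL) Lℓ
    (weight_leftChild_lt hk hmin hdL (by omega) (hd0.imp_right And.left)
      ((pos_r_or_exists_lt_snd hτ hL hk).imp_right fun ⟨v, hv, hv2⟩ =>
        card_lt_card (filter_ssubset.mpr ⟨v, hv, not_le.mpr hv2⟩)))
    (isIntervalCover_leftChild hL hk hmin hdL fun v hv h1 h2 => (hX v (hmem v hv h1 h2)).1)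
  have hright := ih (rightChild hk hmin dR hdR) Lr
    (weight_rightChild_lt hk hmin hdR (by omega) (hd0.imp_right And.right)
      ((pos_ℓ_or_exists_fst_lt hτ hL hk).imp_right fun ⟨v, hv, hv1⟩ =>
        card_lt_card (filter_ssubset.mpr ⟨v, hv, fun h => h.2 hv1⟩)))
    (isIntervalCover_rightChild hL hk hmin hdR fun v hv h1 h2 => (hX v (hmem v hv h1 h2)).2)
  change (P.lo k - B.α) ^ s ≤ 2 * ∑ v ∈ Lℓ, (v.2 - v.1) ^ s + B.ℓ ^ s + dL ^ s at hleft
  change (B.β - P.hi k) ^ s ≤ 2 * ∑ v ∈ Lr, (v.2 - v.1) ^ s + dR ^ s + B.r ^ s at hright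
  have hgap := rpow_sub_le_of_gap hτ hs hsτ B.isLeftEnd B.isRightEnd (j_le hk) (α_le_lo hk)
    (hi_le_β hk)
  have := sum_eq_sum_filter_add_sum_filter_add_sum_filter L (P.lo k) (P.hi k)
    fun v => (v.2 - v.1) ^ s
  linarith

theorem rpow_le (hτ : 0 < τ) (hs : 0 < s) (hsτ : 2 + 1 / τ ≤ 2 ^ (1 / s)) (B : P.Block)
    (L : Finset (ℝ × ℝ)) (hL : IsIntervalCover L (C ∩ B.middle)) :
    (B.β - B.α) ^ s ≤ 2 * ∑ v ∈ L, (v.2 - v.1) ^ s + B.ℓ ^ s + B.r ^ s := by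
  induction h : 2 * #L + B.weight using Nat.strong_induction_on generalizing B L with
  | _ n ih =>
    subst h
    exact rpow_le_of_forall_lt hτ hs hsτ B L hL fun B' L' hlt hL' => ih _ hlt B' L' hL' rfl

end Block

theorem ofReal_le_dimH (P : ThickPresentation C a b τ) (hC : IsCompact C) (hτ : 0 < τ)
    (hs : 0 < s) (hsτ : 2 + 1 / τ ≤ 2 ^ (1 / s)) : ENNReal.ofReal s ≤ dimH C := by
  have hab : a < b := (P.subset_Icc (P.lo_mem 0)).1.trans_lt
    ((P.lo_lt_hi 0).trans_le (P.subset_Icc (P.hi_mem 0)).2)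
  let B₀ : P.Block := ⟨0, a, b, 0, 0, Or.inl rfl, Or.inl rfl, hab.le, le_rfl, le_rfl,
    fun i hi => absurd hi i.not_lt_zero⟩
  refine ofReal_le_dimH_of_forall_isIntervalCover hC hs
    ((one_lt_div hs).mp (one_lt_one_div_of_two_add_le hτ hsτ)).le
    (M := (b - a) ^ s / 2) (by have := Real.rpow_pos_of_pos (sub_pos.mpr hab) s; positivity)
    fun L hL => ?_
  have := Block.rpow_le hτ hs hsτ B₀ L ⟨hL.1, inter_subset_left.trans hL.2⟩
  simp only [B₀, Real.zero_rpow hs.ne', add_zero] at this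
  linarith

end ThickPresentation

lemma connectedComponentIn_eq_Ioo {F : Set ℝ} {x l u : ℝ} (hl : l ∉ F) (hu : u ∉ F)
    (hsub : Ioo l u ⊆ F) (hx : x ∈ Ioo l u) : connectedComponentIn F x = Ioo l u := by
  refine subset_antisymm (fun y hy => ?_) (isPreconnected_Ioo.subset_connectedComponentIn hx hsub)
  have hK := isPreconnected_connectedComponentIn (x := x) (F := F)
  have hxK := mem_connectedComponentIn (hsub hx)
  have hKF := connectedComponentIn_subset F x
  refine ⟨not_le.mp fun hyl => hl (hKF ?_), not_le.mp fun huy => hu (hKF ?_)⟩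
  · exact hK.Icc_subset hy hxK ⟨hyl, hx.1.le⟩
  · exact hK.Icc_subset hxK hy ⟨hx.2.le, huy⟩

lemma connectedComponentIn_subset_Ici {F : Set ℝ} {x l' l : ℝ} (hl : l' < l) (hlx : l ≤ x)
    (hF : Disjoint (Ioo l' l) F) : connectedComponentIn F x ⊆ Ici l := by
  intro y hy
  refine not_lt.mp fun (hyl : y < l) => ?_
  have hxK := mem_connectedComponentIn (connectedComponentIn_nonempty_iff.mp ⟨y, hy⟩)
  have hsub := (isPreconnected_connectedComponentIn.Icc_subset hy hxK).trans
    (connectedComponentIn_subset F x)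
  have hm : (max y l' + l) / 2 ∈ Ioo l' l := by
    constructor <;> linarith [le_max_right y l', max_lt hyl hl]
  exact hF.notMem_of_mem_left hm
    (hsub ⟨by linarith [le_max_left y l', max_lt hyl hl], by linarith [hm.2]⟩)

lemma connectedComponentIn_subset_Iic {F : Set ℝ} {x u u' : ℝ} (hu : u < u') (hxu : x ≤ u)
    (hF : Disjoint (Ioo u u') F) : connectedComponentIn F x ⊆ Iic u := by
  intro y hy
  refine not_lt.mp fun (huy : u < y) => ?_
  have hxK := mem_connectedComponentIn (connectedComponentIn_nonempty_iff.mp ⟨y, hy⟩)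
  have hsub := (isPreconnected_connectedComponentIn.Icc_subset hxK hy).trans
    (connectedComponentIn_subset F x)
  have hm : (u + min y u') / 2 ∈ Ioo u u' := by
    constructor <;> linarith [min_le_right y u', lt_min huy hu]
  exact hF.notMem_of_mem_left hm
    (hsub ⟨by linarith [hm.1], by linarith [min_le_left y u', lt_min huy hu]⟩)

lemma IsTotallyDisconnected.exists_notMem_Ioo {C : Set ℝ} (h : IsTotallyDisconnected C) {x y : ℝ}
    (hxy : x < y) : ∃ z ∈ Ioo x y, z ∉ C := by
  by_contra! hsub
  have := h (Ioo x y) hsub isPreconnected_Ioo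
    (show (2 * x + y) / 3 ∈ Ioo x y by constructor <;> linarith)
    (show (x + 2 * y) / 3 ∈ Ioo x y by constructor <;> linarith)
  linarith

lemma exists_Ioo_of_mem_gapSet {C : Set ℝ} (hC : IsCompact C) (hne : C.Nonempty) {G : Set ℝ}
    (hG : G ∈ gapSet C) : ∃ l u, l ∈ C ∧ u ∈ C ∧ l < u ∧
      Ioo l u ⊆ Icc (sInf C) (sSup C) \ C ∧ G = Ioo l u := by
  obtain ⟨x, ⟨hxI, hxC⟩, rfl⟩ := hG
  have hl : sSup (C ∩ Iic x) ∈ C ∩ Iic x :=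
    (hC.inter_right isClosed_Iic).sSup_mem ⟨sInf C, hC.sInf_mem hne, hxI.1⟩
  have hu : sInf (C ∩ Ici x) ∈ C ∩ Ici x :=
    (hC.inter_right isClosed_Ici).sInf_mem ⟨sSup C, hC.sSup_mem hne, hxI.2⟩
  have hlx : sSup (C ∩ Iic x) < x := hl.2.lt_of_ne fun h => hxC (h ▸ hl.1)
  have hxu : x < sInf (C ∩ Ici x) := hu.2.lt_of_ne' fun h => hxC (h ▸ hu.1)
  have hbddA : BddAbove (C ∩ Iic x) := hC.bddAbove.mono inter_subset_left
  have hbddB : BddBelow (C ∩ Ici x) := hC.bddBelow.mono inter_subset_left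
  have hsub : Ioo (sSup (C ∩ Iic x)) (sInf (C ∩ Ici x)) ⊆ Icc (sInf C) (sSup C) \ C := by
    rintro y ⟨hly, hyu⟩
    refine ⟨⟨(le_csSup hbddA ⟨hC.sInf_mem hne, hxI.1⟩).trans hly.le,
      hyu.le.trans (csInf_le hbddB ⟨hC.sSup_mem hne, hxI.2⟩)⟩, fun hyC => ?_⟩
    rcases le_total y x with h | h
    · exact hly.not_ge (le_csSup hbddA ⟨hyC, h⟩)
    · exact hyu.not_ge (csInf_le hbddB ⟨hyC, h⟩)
  exact ⟨_, _, hl.1, hu.1, hlx.trans hxu, hsub, connectedComponentIn_eq_Ioo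
    (fun h => h.2 hl.1) (fun h => h.2 hu.1) hsub ⟨hlx, hxu⟩⟩

/-- With the junk values `sInf ∅ = sSup ∅ = 0`, the empty set has the single gap `{0}`, so an
injective presentation forces `C` to be nonempty. -/
lemma nonempty_of_injective_of_mem_gapSet {C : Set ℝ} {U : ℕ → Set ℝ}
    (hU : Function.Injective U) (hUgap : ∀ n, U n ∈ gapSet C) : C.Nonempty := by
  by_contra hC
  rw [not_nonempty_iff_eq_empty] at hC
  subst hC
  have h0 : Icc (sInf (∅ : Set ℝ)) (sSup ∅) \ ∅ = {0} := by simp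
  have hU0 : ∀ n, U n = {0} := fun n => by
    obtain ⟨x, hx, hUx⟩ := hUgap n
    rw [h0] at hx hUx
    rw [hUx, mem_singleton_iff.mp hx]
    exact subset_antisymm (connectedComponentIn_subset _ _)
      (singleton_subset_iff.mpr (mem_connectedComponentIn rfl))
  exact zero_ne_one (hU ((hU0 0).trans (hU0 1).symm))

noncomputable def bridge (C : Set ℝ) (U : ℕ → Set ℝ) (k : ℕ) (u : ℝ) : Set ℝ :=
  connectedComponentIn (Icc (sInf C) (sSup C) \ ⋃ i ∈ Finset.range (k + 1), U i) u

theorem nonempty_thickPresentation {C : Set ℝ} (hC : IsCompact C) (hne : C.Nonempty)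
    (htd : IsTotallyDisconnected C) {τ : ℝ} {U : ℕ → Set ℝ} (hUgap : ∀ n, U n ∈ gapSet C)
    (hUsurj : ∀ G ∈ gapSet C, ∃ n, U n = G)
    (hratio : ∀ k, ∀ u ∈ frontier (U k) ∩ C, τ * Metric.diam (U k) ≤ Metric.diam (bridge C U k u)) :
    Nonempty (ThickPresentation C (sInf C) (sSup C) τ) := by
  choose lo hi hloC hhiC hlt hsub hU using fun n => exists_Ioo_of_mem_gapSet hC hne (hUgap n)
  have hdisj : ∀ k i, i ≤ k → Disjoint (Ioo (lo i) (hi i))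
      (Icc (sInf C) (sSup C) \ ⋃ i ∈ Finset.range (k + 1), U i) := fun k i hik =>
    disjoint_left.mpr fun x hx hxF =>
      hxF.2 (mem_biUnion (Finset.mem_range.mpr (by omega)) (hU i ▸ hx))
  have hIcc : ∀ k u, bridge C U k u ⊆ Icc (sInf C) (sSup C) := fun k u =>
    (connectedComponentIn_subset _ _).trans sdiff_subset
  have hthick : ∀ k, ∀ u ∈ ({lo k, hi k} : Set ℝ), ∀ l r, l ≤ r → bridge C U k u ⊆ Icc l r →
      τ * (hi k - lo k) ≤ r - l := fun k u hu l r hlr hB => by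
    have hfr : u ∈ frontier (U k) ∩ C := ⟨by rwa [hU k, frontier_Ioo (hlt k)],
      by rcases hu with rfl | rfl; exacts [hloC k, hhiC k]⟩
    have := hratio k u hfr
    rw [hU k, Real.diam_Ioo (hlt k).le] at this
    exact this.trans ((Metric.diam_mono hB (Metric.isBounded_Icc l r)).trans_eq (Real.diam_Icc hlr))
  have hle : ∀ x ∈ C, sInf C ≤ x ∧ x ≤ sSup C := fun x hx =>
    ⟨csInf_le hC.bddBelow hx, le_csSup hC.bddAbove hx⟩
  refine ⟨{ lo, hi, lo_lt_hi := hlt, lo_mem := hloC, hi_mem := hhiC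
            notMem_of_mem_Ioo := fun k x hx => (hsub k hx).2
            exists_mem_Ioo := fun x hx hxC => ?_
            exists_notMem_Ioo := fun _ _ => htd.exists_notMem_Ioo
            left_mem := hC.sInf_mem hne, right_mem := hC.sSup_mem hne, subset_Icc := hle
            thick_left_of_end := fun k => ?_, thick_left := fun k i hik h => ?_
            thick_right_of_end := fun k => ?_, thick_right := fun k i hik h => ?_ }⟩
  · obtain ⟨n, hn⟩ := hUsurj _ ⟨x, ⟨hx, hxC⟩, rfl⟩
    exact ⟨n, hU n ▸ hn ▸ mem_connectedComponentIn ⟨hx, hxC⟩⟩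
  · refine hthick k _ (Or.inl rfl) _ _ (hle _ (hloC k)).1 fun y hy =>
      ⟨(hIcc k _ hy).1, connectedComponentIn_subset_Iic (hlt k) le_rfl (hdisj k k le_rfl) hy⟩
  · refine hthick k _ (Or.inl rfl) _ _ h fun y hy =>
      ⟨connectedComponentIn_subset_Ici (hlt i) h (hdisj k i hik) hy,
        connectedComponentIn_subset_Iic (hlt k) le_rfl (hdisj k k le_rfl) hy⟩
  · refine hthick k _ (Or.inr rfl) _ _ (hle _ (hhiC k)).2 fun y hy =>
      ⟨connectedComponentIn_subset_Ici (hlt k) le_rfl (hdisj k k le_rfl) hy, (hIcc k _ hy).2⟩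
  · refine hthick k _ (Or.inr rfl) _ _ h fun y hy =>
      ⟨connectedComponentIn_subset_Ici (hlt k) le_rfl (hdisj k k le_rfl) hy,
        connectedComponentIn_subset_Iic (hlt i) h (hdisj k i hik) hy⟩

theorem stmt14 (C : Set ℝ) (hC : IsCompact C)
    (htd : IsTotallyDisconnected C) (τ : ℝ) (hτ : 0 < τ)
    (U : ℕ → Set ℝ) (hUinj : Function.Injective U)
    (hUgap : ∀ n, U n ∈ gapSet C) (hUsurj : ∀ G ∈ gapSet C, ∃ n, U n = G)
    (hratio : ∀ k : ℕ, ∀ u ∈ frontier (U k) ∩ C,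
      τ * Metric.diam (U k) ≤
        Metric.diam (connectedComponentIn
          (Icc (sInf C) (sSup C) \ ⋃ i ∈ Finset.range (k + 1), U i) u)) :
    ENNReal.ofReal (Real.log 2 / Real.log (2 + 1 / τ)) ≤ dimH C := by
  obtain ⟨P⟩ := nonempty_thickPresentation hC (nonempty_of_injective_of_mem_gapSet hUinj hUgap)
    htd hUgap hUsurj hratio
  have hc : 1 < 2 + 1 / τ := by linarith [one_div_pos.mpr hτ]
  refine P.ofReal_le_dimH hC hτ (div_pos (Real.log_pos one_lt_two) (Real.log_pos hc)) ?_
  rw [one_div_div, ← Real.logb, Real.rpow_logb two_pos (by norm_num) (by linarith)]
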